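/- arXiv:1802.01452 — 4 statements merged into one kernel-verified Lean document; each statement's English description precedes it below -/
import Mathlib

section
/- For Hermitian matrices A and B of the same size, Tr(Aᵀ Bᵀ A B) ≤ Tr(A² B²), with equality if and only if AB = (AB)ᵀ. -/
open Matrix

private lemma tr_re_nonneg {n : ℕ} (M : Matrix (Fin n) (Fin n) ℂ) :
    0 ≤ (Matrix.trace (Mᴴ * M)).re ∧ ((Matrix.trace (Mᴴ * M)).re = 0 ↔ M = 0) := by
  have h : (Matrix.trace (Mᴴ * M)).re = ∑ i, ∑ j, Complex.normSq (M j i) := by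
    simp only [Matrix.trace, Matrix.diag, Matrix.mul_apply, Matrix.conjTranspose_apply,
      Complex.re_sum]
    congr 1; ext i; congr 1; ext j
    simp [Complex.normSq_apply]
  constructor
  · rw [h]
    exact Finset.sum_nonneg fun i _ => Finset.sum_nonneg fun j _ => Complex.normSq_nonneg _
  · rw [h]
    constructor
    · intro h0
      ext j i
      have h1 := (Finset.sum_eq_zero_iff_of_nonneg
        (fun i _ => Finset.sum_nonneg fun j _ => Complex.normSq_nonneg (M j i))).mp h0
        i (Finset.mem_univ i)
      have h2 := (Finset.sum_eq_zero_iff_of_nonneg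
        (fun j _ => Complex.normSq_nonneg (M j i))).mp h1 j (Finset.mem_univ j)
      simpa using Complex.normSq_eq_zero.mp h2
    · intro h0; simp [h0]

private lemma transpose_conjT {n : ℕ} (M : Matrix (Fin n) (Fin n) ℂ) :
    (Mᵀ)ᴴ = (Mᴴ)ᵀ := by
  ext i j; simp [Matrix.conjTranspose_apply]

private lemma cyc4 {n : ℕ} (A B C D : Matrix (Fin n) (Fin n) ℂ) :
    Matrix.trace (A * B * C * D) = Matrix.trace (D * A * B * C) := by
  rw [show A * B * C * D = (A * B * C) * D from rfl, Matrix.trace_mul_comm,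
    ← mul_assoc, ← mul_assoc]

/-- For Hermitian matrices `A` and `B`, `Tr(Aᵀ Bᵀ A B) ≤ Tr(A² B²)`,
with equality if and only if `AB = (AB)ᵀ`. -/
theorem stmt_1 {n : ℕ} (A B : Matrix (Fin n) (Fin n) ℂ)
    (hA : A.IsHermitian) (hB : B.IsHermitian) :
    (Matrix.trace (Aᵀ * Bᵀ * A * B)).re ≤ (Matrix.trace (A ^ 2 * B ^ 2)).re ∧
    ((Matrix.trace (Aᵀ * Bᵀ * A * B)).re = (Matrix.trace (A ^ 2 * B ^ 2)).re ↔
      A * B = (A * B)ᵀ) := by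
  set M := A * B - (A * B)ᵀ with hM
  have hMH : Mᴴ = B * A - Aᵀ * Bᵀ := by
    rw [hM, Matrix.conjTranspose_sub, Matrix.conjTranspose_mul, hA.eq, hB.eq,
      transpose_conjT, Matrix.conjTranspose_mul, hA.eq, hB.eq, Matrix.transpose_mul]
  -- expand Mᴴ * M
  have hexp : Mᴴ * M =
      B * A * A * B - B * A * Bᵀ * Aᵀ - Aᵀ * Bᵀ * A * B + Aᵀ * Bᵀ * Bᵀ * Aᵀ := by
    rw [hMH, hM, Matrix.transpose_mul]
    noncomm_ring
  -- trace identities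
  have t1 : Matrix.trace (B * A * A * B) = Matrix.trace (A ^ 2 * B ^ 2) := by
    rw [cyc4, cyc4, cyc4]
    congr 1
    noncomm_ring
  have t4 : Matrix.trace (Aᵀ * Bᵀ * Bᵀ * Aᵀ) = Matrix.trace (A ^ 2 * B ^ 2) := by
    have : Aᵀ * Bᵀ * Bᵀ * Aᵀ = (A * B * B * A)ᵀ := by
      simp [Matrix.transpose_mul, mul_assoc]
    rw [this, Matrix.trace_transpose, cyc4]
    congr 1
    noncomm_ring
  have t2 : Matrix.trace (B * A * Bᵀ * Aᵀ) = Matrix.trace (Aᵀ * Bᵀ * A * B) := by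
    have : B * A * Bᵀ * Aᵀ = (A * B * Aᵀ * Bᵀ)ᵀ := by
      simp [Matrix.transpose_mul, mul_assoc]
    rw [this, Matrix.trace_transpose, cyc4, cyc4]
  have key : Matrix.trace (Mᴴ * M) =
      2 * Matrix.trace (A ^ 2 * B ^ 2) - 2 * Matrix.trace (Aᵀ * Bᵀ * A * B) := by
    rw [hexp, Matrix.trace_add, Matrix.trace_sub, Matrix.trace_sub, t1, t4, t2]
    ring
  have keyre : (Matrix.trace (Mᴴ * M)).re =
      2 * (Matrix.trace (A ^ 2 * B ^ 2)).re - 2 * (Matrix.trace (Aᵀ * Bᵀ * A * B)).re := by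
    rw [key]; simp
  obtain ⟨hnn, hz⟩ := tr_re_nonneg M
  constructor
  · linarith [hnn, keyre]
  · constructor
    · intro heq
      have : (Matrix.trace (Mᴴ * M)).re = 0 := by rw [keyre]; linarith
      have := hz.mp this
      rw [hM, sub_eq_zero] at this
      exact this
    · intro heq
      have : M = 0 := by rw [hM, sub_eq_zero]; exact heq
      have h0 := hz.mpr this
      rw [keyre] at h0
      linarith
end

section
/- For a Hermitian positive semi-definite matrix A and Hermitian positive semi-definite B, equality Tr(AB) = ‖A‖·Tr(B) holds if and only if the support of B (the orthogonal complement of its kernel) is contained in the eigenspace of A belonging to its largest eigenvalue. -/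
open Matrix
open scoped ComplexOrder

/-!
With `μ` the largest eigenvalue of `A`, the matrix `C = μ • 1 - A` is positive semidefinite and
`Tr(CB) = μ Tr(B) - Tr(AB)`. For positive semidefinite `C` and `B`, `Tr(CB) = 0` forces `CB = 0`,
and `CB = 0` says that `C` vanishes on the range of `B`, i.e. on the orthogonal complement of
`ker B`; there `A` acts as `μ`.
-/

lemma RCLike.re_eq_zero_iff_of_nonneg {𝕜 : Type*} [RCLike 𝕜] {z : 𝕜} (hz : 0 ≤ z) :
    RCLike.re z = 0 ↔ z = 0 := by
  obtain ⟨x, -, rfl⟩ := RCLike.nonneg_iff_exists_ofReal.mp hz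
  simp

namespace Matrix

variable {n 𝕜 : Type*} [Fintype n] [RCLike 𝕜]

lemma IsHermitian.star_dotProduct_mulVec_comm {R : Type*} [CommSemiring R] [StarRing R]
    {M : Matrix n n R} (hM : M.IsHermitian) (w v : n → R) :
    star w ⬝ᵥ (M *ᵥ v) = star (M *ᵥ w) ⬝ᵥ v := by
  rw [star_mulVec, hM.eq, dotProduct_mulVec]

lemma IsHermitian.mul_eq_zero_iff_forall_orthogonal_ker {R : Type*} [CommRing R] [StarRing R]
    [DecidableEq n] {B C : Matrix n n R} (hB : B.IsHermitian) (hC : C.IsHermitian) :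
    C * B = 0 ↔ ∀ v, (∀ w, B *ᵥ w = 0 → star w ⬝ᵥ v = 0) → C *ᵥ v = 0 := by
  constructor
  · intro hCB v hv
    have hBC : B * C = 0 := by simpa [hB.eq, hC.eq] using congr(($hCB)ᴴ)
    refine dotProduct_eq_zero _ fun u => ?_
    rw [dotProduct_comm, ← star_star u, hC.star_dotProduct_mulVec_comm]
    exact hv _ (by rw [mulVec_mulVec, hBC, zero_mulVec])
  · intro h
    refine ext_iff_mulVec.mpr fun u => ?_
    rw [← mulVec_mulVec, zero_mulVec]
    refine h _ fun w hw => ?_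
    rw [hB.star_dotProduct_mulVec_comm, hw, star_zero, zero_dotProduct]

open scoped MatrixOrder in
lemma PosSemidef.re_trace_mul_eq_zero_iff {A B : Matrix n n 𝕜} (hA : A.PosSemidef)
    (hB : B.PosSemidef) : RCLike.re (A * B).trace = 0 ↔ A * B = 0 := by
  classical
  obtain ⟨X, rfl⟩ := CStarAlgebra.nonneg_iff_eq_star_mul_self.mp hA.nonneg
  obtain ⟨Y, rfl⟩ := CStarAlgebra.nonneg_iff_eq_star_mul_self.mp hB.nonneg
  simp only [star_eq_conjTranspose]
  -- `Tr(Xᴴ X Yᴴ Y) = Tr(M Mᴴ)` with `M = X Yᴴ`, which is nonnegative and vanishes only at `M = 0`.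
  have htrace : (Xᴴ * X * (Yᴴ * Y)).trace = ((X * Yᴴ) * (X * Yᴴ)ᴴ).trace := by
    rw [conjTranspose_mul, conjTranspose_conjTranspose, Matrix.mul_assoc, trace_mul_comm]
    simp only [Matrix.mul_assoc]
  refine ⟨fun hre => ?_, fun h => by rw [h, trace_zero, map_zero]⟩
  rw [htrace, RCLike.re_eq_zero_iff_of_nonneg (posSemidef_self_mul_conjTranspose _).trace_nonneg,
    trace_mul_conjTranspose_self_eq_zero_iff] at hre
  rw [Matrix.mul_assoc, ← Matrix.mul_assoc X, hre, Matrix.zero_mul, Matrix.mul_zero]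

open scoped MatrixOrder in
lemma IsHermitian.posSemidef_smul_one_sub [DecidableEq n] {A : Matrix n n 𝕜} (hA : A.IsHermitian)
    {μ : ℝ} (hμ : ∀ i, hA.eigenvalues i ≤ μ) : ((μ : 𝕜) • 1 - A).PosSemidef := by
  have : A ≤ algebraMap ℝ _ μ := by
    refine le_algebraMap_of_spectrum_le (fun x hx => ?_) hA.isSelfAdjoint
    obtain ⟨i, rfl⟩ := hA.spectrum_real_eq_range_eigenvalues ▸ hx
    exact hμ i
  rwa [le_iff, Algebra.algebraMap_eq_smul_one, RCLike.real_smul_eq_coe_smul (K := 𝕜)] at this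

end Matrix

/-- For Hermitian positive semi-definite `A`, `B`, equality `Tr(AB) = ‖A‖ Tr(B)`
(with `‖A‖` the largest eigenvalue of `A`) holds if and only if the support of `B`
(the orthogonal complement of `ker B`) is contained in the eigenspace of `A`
belonging to its largest eigenvalue. -/
theorem stmt_3 {n : ℕ} (A B : Matrix (Fin n) (Fin n) ℂ)
    (hA : A.PosSemidef) (hB : B.PosSemidef) :
    (Matrix.trace (A * B)).re =
        (⨆ i, hA.isHermitian.eigenvalues i) * (Matrix.trace B).re ↔
      ∀ v : Fin n → ℂ, (∀ w : Fin n → ℂ, B.mulVec w = 0 → star w ⬝ᵥ v = 0) →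
        A.mulVec v = (((⨆ i, hA.isHermitian.eigenvalues i : ℝ) : ℂ)) • v := by
  set μ : ℝ := ⨆ i, hA.isHermitian.eigenvalues i
  set C : Matrix (Fin n) (Fin n) ℂ := (μ : ℂ) • 1 - A
  have hC : C.PosSemidef := hA.isHermitian.posSemidef_smul_one_sub
    fun i => le_ciSup (Set.finite_range _).bddAbove i
  have htrace : (C * B).trace.re = μ * B.trace.re - (A * B).trace.re := by
    simp [C, Matrix.sub_mul, trace_sub]
  have heigen : ∀ v, A *ᵥ v = (μ : ℂ) • v ↔ C *ᵥ v = 0 := fun v => by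
    rw [sub_mulVec, smul_mulVec, one_mulVec, sub_eq_zero, eq_comm]
  calc (A * B).trace.re = μ * B.trace.re ↔ RCLike.re (C * B).trace = 0 := by
        rw [RCLike.re_to_complex, htrace, sub_eq_zero, eq_comm]
    _ ↔ C * B = 0 := hC.re_trace_mul_eq_zero_iff hB
    _ ↔ _ := hB.isHermitian.mul_eq_zero_iff_forall_orthogonal_ker hC.isHermitian
    _ ↔ _ := by simp only [heigen]
end

section
/- Let F: 𝒮 → ℝ be a convex function on density operators (i.e., F(Σ pᵢ ρᵢ) ≤ Σ pᵢ F(ρᵢ) for probability weights pᵢ), and suppose for each real vector ξ ∈ ℝ^{2M}, F(ρ_{Γ₀, d−ξ}) ≤ c·[ (1/2)(T₀ + ‖d−ξ‖²) + (1/4)(T₀ + ‖d−ξ‖²)² − (1/4)‖d−ξ‖⁴ ] where T₀ ≥ 0 is a constant. If ξ is distributed with a centered probability density P with covariance satisfying ∫P(ξ)‖ξ‖² dξ = T − T₀ and ∫P(ξ) ξ dξ = 0, then ∫ P(ξ) F(ρ_{Γ₀,d−ξ}) dξ ≤ c[ (1/2)(T + ‖d‖²) + (1/4)(T + ‖d‖²)²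 − (1/4)((T−T₀) + ‖d‖²)² ]. -/
/-!
Once the quartic terms cancel, the pointwise bound is affine in `‖d - ξ‖ ^ 2`, so averaging it
only needs the mean of `‖d - ξ‖ ^ 2`; for a centred density this is `‖d‖ ^ 2 + (T - T₀)`, and
the claimed right-hand side is the same affine function evaluated there.
-/

open MeasureTheory

lemma mul_norm_sub_sq_eq {E : Type*} [NormedAddCommGroup E] [InnerProductSpace ℝ E]
    (P : E → ℝ) (d ξ : E) :
    P ξ * ‖d - ξ‖ ^ 2 = ‖d‖ ^ 2 * P ξ - 2 * inner ℝ d (P ξ • ξ) + P ξ * ‖ξ‖ ^ 2 := by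
  rw [norm_sub_sq_real, real_inner_smul_right]; ring

section CenteredDensity

variable {E : Type*} [NormedAddCommGroup E] [InnerProductSpace ℝ E] [MeasurableSpace E]
  {μ : Measure E} {P : E → ℝ}

lemma integrable_mul_norm_sub_sq (hP : Integrable P μ) (hPξ : Integrable (fun ξ ↦ P ξ • ξ) μ)
    (hPξ2 : Integrable (fun ξ ↦ P ξ * ‖ξ‖ ^ 2) μ) (d : E) :
    Integrable (fun ξ ↦ P ξ * ‖d - ξ‖ ^ 2) μ := by
  simp_rw [mul_norm_sub_sq_eq P d]
  exact ((hP.const_mul _).sub ((hPξ.const_inner d).const_mul 2)).add hPξ2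

lemma integral_mul_norm_sub_sq_of_integral_smul_eq_zero [CompleteSpace E]
    (hP : Integrable P μ) (hP1 : ∫ ξ, P ξ ∂μ = 1)
    (hPξ : Integrable (fun ξ ↦ P ξ • ξ) μ) (hPξ0 : ∫ ξ, P ξ • ξ ∂μ = 0)
    (hPξ2 : Integrable (fun ξ ↦ P ξ * ‖ξ‖ ^ 2) μ) (d : E) :
    ∫ ξ, P ξ * ‖d - ξ‖ ^ 2 ∂μ = ‖d‖ ^ 2 + ∫ ξ, P ξ * ‖ξ‖ ^ 2 ∂μ := by
  have hconst : Integrable (fun ξ ↦ ‖d‖ ^ 2 * P ξ) μ := hP.const_mul _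
  have hcross : Integrable (fun ξ ↦ 2 * inner ℝ d (P ξ • ξ)) μ :=
    (hPξ.const_inner d).const_mul 2
  have hdiff : Integrable (fun ξ ↦ ‖d‖ ^ 2 * P ξ - 2 * inner ℝ d (P ξ • ξ)) μ :=
    hconst.sub hcross
  simp_rw [mul_norm_sub_sq_eq P d]
  rw [integral_add hdiff hPξ2, integral_sub hconst hcross, integral_const_mul,
    integral_const_mul, integral_inner hPξ, hPξ0, hP1, inner_zero_right]
  ring

end CenteredDensity

lemma integral_mul_le_of_le_affine {α : Type*} [MeasurableSpace α] {μ : Measure α}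
    {P f g : α → ℝ} {a b : ℝ} (hP0 : ∀ x, 0 ≤ P x) (hP : Integrable P μ)
    (hP1 : ∫ x, P x ∂μ = 1) (hPf : Integrable (fun x ↦ P x * f x) μ)
    (hPg : Integrable (fun x ↦ P x * g x) μ) (hfg : ∀ x, f x ≤ a + b * g x) :
    ∫ x, P x * f x ∂μ ≤ a + b * ∫ x, P x * g x ∂μ := by
  calc ∫ x, P x * f x ∂μ ≤ ∫ x, a * P x + b * (P x * g x) ∂μ :=
        integral_mono hPf ((hP.const_mul a).add (hPg.const_mul b)) fun x ↦ by
          nlinarith [mul_le_mul_of_nonneg_left (hfg x) (hP0 x)]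
    _ = a + b * ∫ x, P x * g x ∂μ := by
        rw [integral_add (hP.const_mul a) (hPg.const_mul b), integral_const_mul,
          integral_const_mul, hP1, mul_one]

theorem stmt_15_general {M : ℕ} (c T₀ T : ℝ)
    (d : EuclideanSpace ℝ (Fin (2 * M)))
    (P : EuclideanSpace ℝ (Fin (2 * M)) → ℝ)
    (f : EuclideanSpace ℝ (Fin (2 * M)) → ℝ)
    (hPpos : ∀ ξ, 0 ≤ P ξ)
    (hPint : Integrable P)
    (hPnorm : ∫ ξ, P ξ = 1)
    (hPvecint : Integrable (fun ξ => P ξ • ξ))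
    (hPmean : (∫ ξ, P ξ • ξ) = 0)
    (hPsqint : Integrable (fun ξ => P ξ * ‖ξ‖ ^ 2))
    (hPsq : (∫ ξ, P ξ * ‖ξ‖ ^ 2) = T - T₀)
    (hfint : Integrable (fun ξ => P ξ * f ξ))
    (hf : ∀ ξ, f ξ ≤ c * ((1 / 2) * (T₀ + ‖d - ξ‖ ^ 2)
      + (1 / 4) * (T₀ + ‖d - ξ‖ ^ 2) ^ 2 - (1 / 4) * ‖d - ξ‖ ^ 4)) :
    (∫ ξ, P ξ * f ξ) ≤ c * ((1 / 2) * (T + ‖d‖ ^ 2)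
      + (1 / 4) * (T + ‖d‖ ^ 2) ^ 2 - (1 / 4) * ((T - T₀) + ‖d‖ ^ 2) ^ 2) := by
  have hf_affine : ∀ ξ, f ξ ≤ c * (T₀ / 2 + T₀ ^ 2 / 4) + c * (1 + T₀) / 2 * ‖d - ξ‖ ^ 2 :=
    fun ξ ↦ (hf ξ).trans_eq (by ring)
  have hmean : ∫ ξ, P ξ * ‖d - ξ‖ ^ 2 = ‖d‖ ^ 2 + (T - T₀) := by
    rw [integral_mul_norm_sub_sq_of_integral_smul_eq_zero hPint hPnorm hPvecint hPmean hPsqint,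
      hPsq]
  calc ∫ ξ, P ξ * f ξ
      ≤ c * (T₀ / 2 + T₀ ^ 2 / 4) + c * (1 + T₀) / 2 * ∫ ξ, P ξ * ‖d - ξ‖ ^ 2 :=
        integral_mul_le_of_le_affine hPpos hPint hPnorm hfint
          (integrable_mul_norm_sub_sq hPint hPvecint hPsqint d) hf_affine
    _ = _ := by rw [hmean]; ring

/-- Gaussian-mixture averaging step: if a function `f` (the QFI of the pure
Gaussian state `ρ_{Γ₀, d−ξ}`) satisfies the pointwise bound
`f ξ ≤ c [ (1/2)(T₀ + ‖d−ξ‖²) + (1/4)(T₀ + ‖d−ξ‖²)² − (1/4)‖d−ξ‖⁴ ]`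
and `ξ` is distributed with a centered probability density `P` with
`∫ P(ξ)‖ξ‖² dξ = T − T₀`, then
`∫ P(ξ) f(ξ) dξ ≤ c [ (1/2)(T + ‖d‖²) + (1/4)(T + ‖d‖²)²
  − (1/4)((T − T₀) + ‖d‖²)² ]`. -/
theorem stmt_15 {M : ℕ} (c T₀ T : ℝ) (hc : 0 < c) (hT₀ : 0 ≤ T₀)
    (d : EuclideanSpace ℝ (Fin (2 * M)))
    (P : EuclideanSpace ℝ (Fin (2 * M)) → ℝ)
    (f : EuclideanSpace ℝ (Fin (2 * M)) → ℝ)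
    (hPpos : ∀ ξ, 0 ≤ P ξ)
    (hPint : Integrable P)
    (hPnorm : ∫ ξ, P ξ = 1)
    (hPvecint : Integrable (fun ξ => P ξ • ξ))
    (hPmean : (∫ ξ, P ξ • ξ) = 0)
    (hPsqint : Integrable (fun ξ => P ξ * ‖ξ‖ ^ 2))
    (hPsq : (∫ ξ, P ξ * ‖ξ‖ ^ 2) = T - T₀)
    (hfint : Integrable (fun ξ => P ξ * f ξ))
    (hf : ∀ ξ, f ξ ≤ c * ((1 / 2) * (T₀ + ‖d - ξ‖ ^ 2)
      + (1 / 4) * (T₀ + ‖d - ξ‖ ^ 2) ^ 2 - (1 / 4) * ‖d - ξ‖ ^ 4)) :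
    (∫ ξ, P ξ * f ξ) ≤ c * ((1 / 2) * (T + ‖d‖ ^ 2)
      + (1 / 4) * (T + ‖d‖ ^ 2) ^ 2 - (1 / 4) * ((T - T₀) + ‖d‖ ^ 2) ^ 2) :=
  stmt_15_general c T₀ T d P f hPpos hPint hPnorm hPvecint hPmean hPsqint hPsq hfint hf
end

section
/- Let ψ be a unit vector in a Hilbert space, G a self-adjoint operator with ψ in its domain, ⟨G⟩ = ⟨ψ, Gψ⟩ and (ΔG)² = ⟨ψ, G²ψ⟩ − ⟨G⟩² > 0. Define ψ⊥ = (G − ⟨G⟩)ψ/ΔG and φ± = (ψ ∓ i ψ⊥)/√2. Then ⟨ψ, ψ⊥⟩ = 0, ‖ψ⊥‖ = 1, φ± are orthonormal, and the rank-2 operator L = −2i[G, |ψ⟩⟨ψ|] satisfies L φ± = ±2ΔG φ±. -/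
open scoped InnerProductSpace ComplexConjugate

/-!
Since `ψ` is a unit vector, `(G - ⟨G⟩)ψ` is orthogonal to `ψ`, and for symmetric `G` its squared
norm is the variance `(ΔG)²`, so `ψ, ψ⊥` is an orthonormal pair. The commutator `[G, |ψ⟩⟨ψ|]`
sends `ψ ↦ ΔG ψ⊥` and `ψ⊥ ↦ -ΔG ψ` (the latter because `⟪ψ, G ψ⊥⟫ = ΔG`), so on the plane
spanned by `ψ, ψ⊥` it is `ΔG` times a rotation by a right angle, whose eigenvectors are
`ψ ∓ iψ⊥` with eigenvalues `±i`.
-/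

section

variable {E : Type*} [NormedAddCommGroup E] [InnerProductSpace ℂ E]

theorem norm_eq_one_of_inner_self_eq_one {x : E} (hx : ⟪x, x⟫_ℂ = 1) : ‖x‖ = 1 := by
  rw [norm_eq_sqrt_re_inner (𝕜 := ℂ), hx]
  simp

theorem inner_invSqrtTwo_smul_add_smul {u v : E} (hu : ⟪u, u⟫_ℂ = 1) (hv : ⟪v, v⟫_ℂ = 1)
    (huv : ⟪u, v⟫_ℂ = 0) (a b : ℂ) :
    ⟪((Real.sqrt 2 : ℂ))⁻¹ • (u + a • v), ((Real.sqrt 2 : ℂ))⁻¹ • (u + b • v)⟫_ℂ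
      = (1 + conj a * b) / 2 := by
  have hvu : ⟪v, u⟫_ℂ = 0 := by rw [← inner_conj_symm, huv, map_zero]
  have hsqrt : ((Real.sqrt 2 : ℂ)) * (Real.sqrt 2 : ℂ) = 2 := by
    norm_cast; exact Real.mul_self_sqrt zero_le_two
  simp only [inner_smul_left, inner_smul_right, inner_add_left, inner_add_right, hu, hv, huv,
    hvu, map_inv₀, Complex.conj_ofReal]
  field_simp
  linear_combination (-(1 + conj a * b)) * hsqrt

theorem apply_smul_add_smul_of_sq_eq_neg_one {L : E →ₗ[ℂ] E} {u v : E} {κ c : ℂ}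
    (hc : c ^ 2 = -1) (hu : L u = -κ • v) (hv : L v = κ • u) (s : ℂ) :
    L (s • (u + c • v)) = (κ * c) • s • (u + c • v) := by
  rw [map_smul, map_add, map_smul, hu, hv]
  match_scalars
  · linear_combination (-(s * κ)) * hc
  · ring

theorem inner_sub_inner_smul_self {ψ : E} (hψ : ⟪ψ, ψ⟫_ℂ = 1) (x : E) :
    ⟪ψ, x - ⟪ψ, x⟫_ℂ • ψ⟫_ℂ = 0 := by
  rw [inner_sub_right, inner_smul_right, hψ, mul_one, sub_self]

theorem inner_apply_sub_expectation_smul (G : E →ₗ[ℂ] E) (ψ : E) :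
    ⟪ψ, G (G ψ - ⟪ψ, G ψ⟫_ℂ • ψ)⟫_ℂ = ⟪ψ, G (G ψ)⟫_ℂ - ⟪ψ, G ψ⟫_ℂ ^ 2 := by
  rw [map_sub, map_smul, inner_sub_right, inner_smul_right, sq]

theorem LinearMap.IsSymmetric.inner_self_sub_expectation_smul {G : E →ₗ[ℂ] E}
    (hG : G.IsSymmetric) {ψ : E} (hψ : ⟪ψ, ψ⟫_ℂ = 1) :
    ⟪G ψ - ⟪ψ, G ψ⟫_ℂ • ψ, G ψ - ⟪ψ, G ψ⟫_ℂ • ψ⟫_ℂ = ⟪ψ, G (G ψ)⟫_ℂ - ⟪ψ, G ψ⟫_ℂ ^ 2 := by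
  rw [inner_sub_left, inner_smul_left, inner_sub_inner_smul_self hψ, mul_zero, sub_zero,
    hG, inner_apply_sub_expectation_smul]

theorem commutator_rankOne_apply {G P : E →ₗ[ℂ] E} {ψ : E} (hP : ∀ x : E, P x = ⟪ψ, x⟫_ℂ • ψ)
    (x : E) : (G ∘ₗ P - P ∘ₗ G) x = ⟪ψ, x⟫_ℂ • G ψ - ⟪ψ, G x⟫_ℂ • ψ := by
  rw [LinearMap.sub_apply, LinearMap.comp_apply, LinearMap.comp_apply, hP, hP, map_smul]

/-- The paper's `ψ⊥`, with `Δ` standing for `ΔG`. -/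
noncomputable def normalizedDeviation (G : E →ₗ[ℂ] E) (ψ : E) (Δ : ℝ) : E :=
  ((Δ : ℂ))⁻¹ • (G ψ - ⟪ψ, G ψ⟫_ℂ • ψ)

section NormalizedDeviation

variable {G : E →ₗ[ℂ] E} {ψ : E} {Δ : ℝ}

theorem smul_normalizedDeviation (hΔ : (Δ : ℂ) ≠ 0) :
    (Δ : ℂ) • normalizedDeviation G ψ Δ = G ψ - ⟪ψ, G ψ⟫_ℂ • ψ :=
  smul_inv_smul₀ hΔ _

theorem inner_normalizedDeviation_right (hψ : ⟪ψ, ψ⟫_ℂ = 1) :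
    ⟪ψ, normalizedDeviation G ψ Δ⟫_ℂ = 0 := by
  rw [normalizedDeviation, inner_smul_right, inner_sub_inner_smul_self hψ, mul_zero]

theorem inner_normalizedDeviation_self (hG : G.IsSymmetric) (hψ : ⟪ψ, ψ⟫_ℂ = 1)
    (hΔ : (Δ : ℂ) ≠ 0) (hΔsq : (Δ : ℂ) ^ 2 = ⟪ψ, G (G ψ)⟫_ℂ - ⟪ψ, G ψ⟫_ℂ ^ 2) :
    ⟪normalizedDeviation G ψ Δ, normalizedDeviation G ψ Δ⟫_ℂ = 1 := by
  rw [normalizedDeviation, inner_smul_left, inner_smul_right,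
    hG.inner_self_sub_expectation_smul hψ, ← hΔsq, map_inv₀, Complex.conj_ofReal]
  field_simp

theorem inner_apply_normalizedDeviation (hΔ : (Δ : ℂ) ≠ 0)
    (hΔsq : (Δ : ℂ) ^ 2 = ⟪ψ, G (G ψ)⟫_ℂ - ⟪ψ, G ψ⟫_ℂ ^ 2) :
    ⟪ψ, G (normalizedDeviation G ψ Δ)⟫_ℂ = Δ := by
  rw [normalizedDeviation, map_smul, inner_smul_right, inner_apply_sub_expectation_smul, ← hΔsq]
  field_simp

theorem commutator_rankOne_apply_self {P : E →ₗ[ℂ] E} (hP : ∀ x : E, P x = ⟪ψ, x⟫_ℂ • ψ)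
    (hψ : ⟪ψ, ψ⟫_ℂ = 1) (hΔ : (Δ : ℂ) ≠ 0) :
    (G ∘ₗ P - P ∘ₗ G) ψ = (Δ : ℂ) • normalizedDeviation G ψ Δ := by
  rw [commutator_rankOne_apply hP, hψ, one_smul, smul_normalizedDeviation hΔ]

theorem commutator_rankOne_apply_normalizedDeviation {P : E →ₗ[ℂ] E}
    (hP : ∀ x : E, P x = ⟪ψ, x⟫_ℂ • ψ) (hψ : ⟪ψ, ψ⟫_ℂ = 1) (hΔ : (Δ : ℂ) ≠ 0)
    (hΔsq : (Δ : ℂ) ^ 2 = ⟪ψ, G (G ψ)⟫_ℂ - ⟪ψ, G ψ⟫_ℂ ^ 2) :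
    (G ∘ₗ P - P ∘ₗ G) (normalizedDeviation G ψ Δ) = -(Δ : ℂ) • ψ := by
  rw [commutator_rankOne_apply hP, inner_normalizedDeviation_right hψ,
    inner_apply_normalizedDeviation hΔ hΔsq, zero_smul, zero_sub, neg_smul]

end NormalizedDeviation

end

/-- Let `ψ` be a unit vector, `G` a symmetric operator, `⟨G⟩ = ⟪ψ, Gψ⟫` and
`(ΔG)² = ⟪ψ, G²ψ⟫ − ⟨G⟩² > 0`. With `ψ⊥ = (G − ⟨G⟩)ψ/ΔG` and
`φ± = (ψ ∓ i ψ⊥)/√2`, the vectors `ψ, ψ⊥` are orthonormal, `φ±` are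
orthonormal, and `L = −2i[G, |ψ⟩⟨ψ|]` satisfies `L φ± = ±2ΔG φ±`. -/
theorem stmt_17 {E : Type*} [NormedAddCommGroup E] [InnerProductSpace ℂ E]
    (G : E →ₗ[ℂ] E) (hG : ∀ x y : E, ⟪G x, y⟫_ℂ = ⟪x, G y⟫_ℂ)
    (ψ : E) (hψ : ‖ψ‖ = 1)
    (Δ : ℝ) (hΔ : 0 < Δ)
    (hΔsq : ((Δ : ℂ)) ^ 2 = ⟪ψ, G (G ψ)⟫_ℂ - ⟪ψ, G ψ⟫_ℂ ^ 2)
    (ψp : E) (hψp : ψp = ((Δ : ℂ))⁻¹ • (G ψ - ⟪ψ, G ψ⟫_ℂ • ψ))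
    (φp φm : E)
    (hφp : φp = ((Real.sqrt 2 : ℂ))⁻¹ • (ψ - Complex.I • ψp))
    (hφm : φm = ((Real.sqrt 2 : ℂ))⁻¹ • (ψ + Complex.I • ψp))
    (P : E →ₗ[ℂ] E) (hP : ∀ x : E, P x = ⟪ψ, x⟫_ℂ • ψ)
    (L : E →ₗ[ℂ] E)
    (hL : L = (-(2 : ℂ) * Complex.I) • (G ∘ₗ P - P ∘ₗ G)) :
    ⟪ψ, ψp⟫_ℂ = 0 ∧ ‖ψp‖ = 1 ∧
    ⟪φp, φm⟫_ℂ = 0 ∧ ‖φp‖ = 1 ∧ ‖φm‖ = 1 ∧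
    L φp = ((2 * Δ : ℝ) : ℂ) • φp ∧ L φm = (-(2 * Δ : ℝ) : ℂ) • φm := by
  have hψψ : ⟪ψ, ψ⟫_ℂ = 1 := inner_self_eq_one_of_norm_eq_one hψ
  have hΔ0 : (Δ : ℂ) ≠ 0 := by exact_mod_cast hΔ.ne'
  obtain rfl : ψp = normalizedDeviation G ψ Δ := hψp
  have hψψp := inner_normalizedDeviation_right (G := G) (Δ := Δ) hψψ
  have hψpψp := inner_normalizedDeviation_self hG hψψ hΔ0 hΔsq
  have hLψ : L ψ = -(2 * Complex.I * Δ) • normalizedDeviation G ψ Δ := by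
    rw [hL, LinearMap.smul_apply, commutator_rankOne_apply_self hP hψψ hΔ0, smul_smul]
    ring_nf
  have hLψp : L (normalizedDeviation G ψ Δ) = (2 * Complex.I * Δ) • ψ := by
    rw [hL, LinearMap.smul_apply, commutator_rankOne_apply_normalizedDeviation hP hψψ hΔ0 hΔsq,
      smul_smul]
    ring_nf
  rw [sub_eq_add_neg, ← neg_smul] at hφp
  have hinner := inner_invSqrtTwo_smul_add_smul hψψ hψpψp hψψp
  have hI : Complex.I ^ 2 = -1 := Complex.I_sq
  subst hφp hφm
  refine ⟨hψψp, norm_eq_one_of_inner_self_eq_one hψpψp, by rw [hinner]; simp,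
    norm_eq_one_of_inner_self_eq_one (by rw [hinner]; simp),
    norm_eq_one_of_inner_self_eq_one (by rw [hinner]; simp), ?_, ?_⟩
  · rw [apply_smul_add_smul_of_sq_eq_neg_one (by rw [neg_sq, hI]) hLψ hLψp]
    congr 1
    push_cast
    linear_combination (-2 * (Δ : ℂ)) * hI
  · rw [apply_smul_add_smul_of_sq_eq_neg_one hI hLψ hLψp]
    congr 1
    push_cast
    linear_combination (2 * (Δ : ℂ)) * hI
end
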